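/- For a positive integer m, nonzero real λ, and nonnegative integers n ≥ k ≥ 0, m^{n−k}·S_{1,λ/m}(n,k) = ∑_{i=k}^{n} C(i,k)·V_{m,λ}(n,i)·(1)_{i−k,λ}, where S_{1,λ/m} are the degenerate Stirling numbers of the first kind with parameter λ/m and V_{m,λ} the degenerate Whitney numbers of the first kind. -/
import Mathlib


open Finset

noncomputable def dff (lam x : ℝ) (n : ℕ) : ℝ := ∏ i ∈ Finset.range n, (x - i * lam)

noncomputable def drf (lam x : ℝ) (n : ℕ) : ℝ := ∏ i ∈ Finset.range n, (x + i * lam)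

lemma dff_succ (lam x : ℝ) (n : ℕ) : dff lam x (n+1) = dff lam x n * (x - n * lam) := by
  simp [dff, Finset.prod_range_succ]

/-- Degenerate Vandermonde identity. -/
lemma dff_vand (lam x y : ℝ) : ∀ i : ℕ, dff lam (x + y) i =
    ∑ k ∈ Finset.range (i+1), (i.choose k : ℝ) * dff lam x k * dff lam y (i - k) := by
  intro i
  induction i with
  | zero => simp [dff]
  | succ i ih =>
    rw [dff_succ, ih, Finset.sum_mul]
    have key : ∀ k ∈ Finset.range (i+1),
        (i.choose k : ℝ) * dff lam x k * dff lam y (i - k) * (x + y - i * lam)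
        = (i.choose k : ℝ) * dff lam x (k+1) * dff lam y (i - k)
          + (i.choose k : ℝ) * dff lam x k * dff lam y (i + 1 - k) := by
      intro k hk
      rw [Finset.mem_range] at hk
      have hk' : k ≤ i := Nat.lt_succ_iff.mp hk
      have h1 : i + 1 - k = (i - k) + 1 := by omega
      rw [dff_succ, h1, dff_succ]
      have hcast : ((i - k : ℕ) : ℝ) = (i : ℝ) - k := by
        push_cast [Nat.cast_sub hk']; ring
      rw [hcast]
      ring
    rw [Finset.sum_congr rfl key, Finset.sum_add_distrib]
    -- RHS
    rw [Finset.sum_range_succ' (fun k => ((i+1).choose k : ℝ) * dff lam x k * dff lam y (i+1-k)) (i+1)]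
    have g0 : (((i+1).choose 0 : ℕ) : ℝ) * dff lam x 0 * dff lam y (i+1-0) = dff lam y (i+1) := by
      simp [dff]
    rw [g0]
    have gsucc : ∀ k ∈ Finset.range (i+1),
        (((i+1).choose (k+1) : ℕ) : ℝ) * dff lam x (k+1) * dff lam y (i+1-(k+1))
        = (i.choose k : ℝ) * dff lam x (k+1) * dff lam y (i-k)
          + (i.choose (k+1) : ℝ) * dff lam x (k+1) * dff lam y (i-k) := by
      intro k hk
      have : i + 1 - (k+1) = i - k := by omega
      rw [this, Nat.choose_succ_succ]
      push_cast
      ring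
    rw [Finset.sum_congr rfl gsucc, Finset.sum_add_distrib]
    -- second sum on LHS
    have lhs2 : ∑ k ∈ Finset.range (i+1), (i.choose k : ℝ) * dff lam x k * dff lam y (i+1-k)
        = (∑ k ∈ Finset.range (i+1), (i.choose (k+1) : ℝ) * dff lam x (k+1) * dff lam y (i-k))
          + dff lam y (i+1) := by
      rw [Finset.sum_range_succ' (fun k => (i.choose k : ℝ) * dff lam x k * dff lam y (i+1-k)) i]
      congr 1
      · rw [Finset.sum_range_succ]
        simp only [Nat.choose_succ_self, Nat.cast_zero, zero_mul]
        rw [add_zero]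
        apply Finset.sum_congr rfl
        intro k hk
        rw [Finset.mem_range] at hk
        have : i + 1 - (k+1) = i - k := by omega
        rw [this]
      · simp [dff]
    rw [lhs2]
    ring

/-- Scaling: dff lam (m*x) k = m^k * dff (lam/m) x k for m ≠ 0. -/
lemma dff_scale (lam x : ℝ) (m : ℝ) (hm : m ≠ 0) (k : ℕ) :
    dff lam (m * x) k = m ^ k * dff (lam / m) x k := by
  unfold dff
  have h : ∀ i ∈ Finset.range k, x * m - i * lam = m * (x - i * (lam / m)) := by
    intro i _
    field_simp
  rw [mul_comm m x, Finset.prod_congr rfl h, Finset.prod_mul_distrib, Finset.prod_const,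
    Finset.card_range]

lemma dff_self_mul (mu : ℝ) (j : ℕ) (i : ℕ) (h : j < i) : dff mu ((j : ℝ) * mu) i = 0 := by
  unfold dff
  apply Finset.prod_eq_zero (Finset.mem_range.mpr h)
  ring

lemma dff_self_ne (mu : ℝ) (hmu : mu ≠ 0) (j : ℕ) : dff mu ((j : ℝ) * mu) j ≠ 0 := by
  unfold dff
  apply Finset.prod_ne_zero_iff.mpr
  intro i hi
  rw [Finset.mem_range] at hi
  have : (j : ℝ) * mu - i * mu = ((j : ℝ) - i) * mu := by ring
  rw [this]
  apply mul_ne_zero _ hmu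
  have : (i : ℝ) < j := by exact_mod_cast hi
  linarith

/-- Uniqueness of coefficients in the basis of generalized falling factorials. -/
lemma dff_uniq (mu : ℝ) (hmu : mu ≠ 0) (N : ℕ) (c d : ℕ → ℝ)
    (h : ∀ x : ℝ, ∑ k ∈ Finset.range (N+1), c k * dff mu x k
      = ∑ k ∈ Finset.range (N+1), d k * dff mu x k) :
    ∀ j, j ≤ N → c j = d j := by
  intro j
  induction j using Nat.strong_induction_on with
  | _ j ih =>
    intro hj
    have h0 : ∑ k ∈ Finset.range (N+1), (c k - d k) * dff mu ((j : ℝ) * mu) k = 0 := by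
      have := h ((j : ℝ) * mu)
      simp only [sub_mul]
      rw [Finset.sum_sub_distrib, this, sub_self]
    rw [Finset.sum_eq_single_of_mem j (Finset.mem_range.mpr (Nat.lt_succ_of_le hj))] at h0
    · rcases mul_eq_zero.mp h0 with h1 | h1
      · linarith [sub_eq_zero.mp (by linarith : c j - d j = 0)]
      · exact absurd h1 (dff_self_ne mu hmu j)
    · intro b hb hbj
      rcases lt_or_gt_of_ne hbj with hlt | hgt
      · rw [Finset.mem_range] at hb
        have : c b - d b = 0 := sub_eq_zero.mpr (ih b hlt (by omega))
        rw [this, zero_mul]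
      · rw [dff_self_mul mu j b hgt]; ring

theorem stmt13 (m : ℕ) (hm : 1 ≤ m) (lam : ℝ) (hlam : lam ≠ 0) (V S1 : ℕ → ℕ → ℝ)
    (hV : ∀ (x : ℝ) (n : ℕ), (m : ℝ) ^ n * dff 1 x n =
      ∑ k ∈ Finset.range (n + 1), V n k * dff lam ((m : ℝ) * x + 1) k)
    (hS1 : ∀ (x : ℝ) (n : ℕ), dff 1 x n =
      ∑ k ∈ Finset.range (n + 1), S1 n k * dff (lam / m) x k)
    (n k : ℕ) (hk : k ≤ n) :
    (m : ℝ) ^ (n - k) * S1 n k =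
      ∑ i ∈ Finset.Icc k n, (Nat.choose i k : ℝ) * V n i * dff lam 1 (i - k) := by
  have hm0 : (m : ℝ) ≠ 0 := by positivity
  set mu := lam / (m : ℝ) with hmu_def
  have key : ∀ x : ℝ, ∑ j ∈ Finset.range (n+1), ((m : ℝ)^n * S1 n j) * dff mu x j
      = ∑ j ∈ Finset.range (n+1),
        (∑ i ∈ Finset.Icc j n, (Nat.choose i j : ℝ) * V n i * (m : ℝ)^j * dff lam 1 (i - j))
          * dff mu x j := by
    intro x
    have L : ∑ j ∈ Finset.range (n+1), ((m : ℝ)^n * S1 n j) * dff mu x j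
        = (m : ℝ)^n * dff 1 x n := by
      rw [hS1 x n, Finset.mul_sum]
      apply Finset.sum_congr rfl
      intro j _
      ring
    rw [L, hV x n]
    have expand : ∀ i : ℕ, dff lam ((m : ℝ) * x + 1) i
        = ∑ j ∈ Finset.range (i+1),
            (Nat.choose i j : ℝ) * (m : ℝ)^j * dff mu x j * dff lam 1 (i - j) := by
      intro i
      rw [dff_vand lam ((m : ℝ) * x) 1 i]
      apply Finset.sum_congr rfl
      intro j _
      rw [dff_scale lam x (m : ℝ) hm0 j]
      ring
    calc ∑ i ∈ Finset.range (n+1), V n i * dff lam ((m : ℝ) * x + 1) i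
        = ∑ i ∈ Finset.range (n+1), ∑ j ∈ Finset.range (i+1),
            V n i * ((Nat.choose i j : ℝ) * (m : ℝ)^j * dff mu x j * dff lam 1 (i - j)) := by
          apply Finset.sum_congr rfl
          intro i _
          rw [expand i, Finset.mul_sum]
      _ = ∑ j ∈ Finset.range (n+1), ∑ i ∈ Finset.Ico j (n+1),
            V n i * ((Nat.choose i j : ℝ) * (m : ℝ)^j * dff mu x j * dff lam 1 (i - j)) := by
          have := (Finset.sum_Ico_Ico_comm 0 (n+1)
            (fun j i => V n i * ((Nat.choose i j : ℝ) * (m : ℝ)^j * dff mu x j * dff lam 1 (i - j)))).symm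
          simpa only [Nat.Ico_zero_eq_range] using this
      _ = ∑ j ∈ Finset.range (n+1),
            (∑ i ∈ Finset.Icc j n, (Nat.choose i j : ℝ) * V n i * (m : ℝ)^j * dff lam 1 (i - j))
              * dff mu x j := by
          apply Finset.sum_congr rfl
          intro j _
          rw [Finset.sum_mul]
          rw [← Finset.Ico_add_one_right_eq_Icc]
          apply Finset.sum_congr rfl
          intro i _
          ring
  have hmu0 : mu ≠ 0 := div_ne_zero hlam hm0
  have huniq := dff_uniq mu hmu0 n _ _ key k hk
  have hmk : (m : ℝ)^k ≠ 0 := pow_ne_zero _ hm0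
  have hsplit : (m : ℝ)^n = (m : ℝ)^(n-k) * (m : ℝ)^k := by
    rw [← pow_add]
    congr 1
    omega
  rw [hsplit, mul_assoc, mul_comm ((m:ℝ)^k) (S1 n k), ← mul_assoc] at huniq
  have hr : (∑ i ∈ Finset.Icc k n, (Nat.choose i k : ℝ) * V n i * (m : ℝ)^k * dff lam 1 (i - k))
      = (∑ i ∈ Finset.Icc k n, (Nat.choose i k : ℝ) * V n i * dff lam 1 (i - k)) * (m : ℝ)^k := by
    rw [Finset.sum_mul]
    apply Finset.sum_congr rfl
    intro i _
    ring
  rw [hr] at huniq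
  exact mul_right_cancel₀ hmk huniq
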